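/- Let n be odd and q = 2^n. Suppose the number of points N (including the point at infinity) on the smooth projective hyperelliptic curve y² + y = f x⁹ + a x⁵ + b x³ + c x + d over 𝔽_q, with f ≠ 0, satisfies N − (q+1) = S where S = Σ_{x ∈ 𝔽_q} (−1)^{Tr(f x⁹ + a x⁵ + b x³ + c x + d)}. Then N − (q+1) ∈ {0, ±√(2q), ±2√(2q), ±4√(2q)}. -/

import Mathlib

open Finset
set_option linter.unusedSectionVars false
section Aux
variable {K : Type*} [Field K] [Fintype K] [Algebra (ZMod 2) K]

lemma aux_two_eq_zero : (2 : K) = 0 := by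
  have h2 : ((2 : ZMod 2)) = 0 := by decide
  calc (2 : K) = algebraMap (ZMod 2) K 2 := (map_ofNat _ 2).symm
    _ = algebraMap (ZMod 2) K 0 := by rw [h2]
    _ = 0 := map_zero _

lemma aux_self_add (u : K) : u + u = 0 := by
  linear_combination u * aux_two_eq_zero (K := K)

lemma zmod_sign_add (x y : ZMod 2) :
    ((-1 : ℤ)) ^ (x + y).val = (-1 : ℤ) ^ x.val * (-1 : ℤ) ^ y.val := by
  revert x y; decide

lemma zmod_sign_one (x : ZMod 2) :
    ((-1 : ℤ)) ^ (x + 1).val = -((-1 : ℤ) ^ x.val) := by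
  revert x; decide

lemma zmod_eq_one {x : ZMod 2} (h : x ≠ 0) : x = 1 := by revert h; revert x; decide

noncomputable def frobAlg (K : Type*) [Field K] [Fintype K] [Algebra (ZMod 2) K] :
    K ≃ₐ[ZMod 2] K :=
  AlgEquiv.ofBijective
    { toFun := fun u => u ^ 2
      map_one' := one_pow 2
      map_mul' := fun x y => mul_pow x y 2
      map_zero' := zero_pow (by norm_num)
      map_add' := fun x y => by
        have h := aux_two_eq_zero (K := K); linear_combination x * y * h
      commutes' := fun r => by
        have h : r ^ 2 = r := by revert r; decide
        show (algebraMap (ZMod 2) K r) ^ 2 = algebraMap (ZMod 2) K r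
        rw [← map_pow, h] }
    (by
      have hinj : Function.Injective (fun u : K => u ^ 2) := by
        intro x y hxy
        have h := aux_two_eq_zero (K := K)
        have hz : (x - y) ^ 2 = 0 := by
          simp only at hxy
          linear_combination hxy + (y * y - x * y) * h
        have := pow_eq_zero_iff (n := 2) (by norm_num) |>.mp hz
        exact sub_eq_zero.mp this
      exact ⟨hinj, Finite.injective_iff_surjective.mp hinj⟩)

lemma trace_sq (u : K) :
    Algebra.trace (ZMod 2) K (u ^ 2) = Algebra.trace (ZMod 2) K u :=
  Algebra.trace_eq_of_algEquiv (frobAlg K) u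

lemma trace_pow_pow (k : ℕ) (u : K) :
    Algebra.trace (ZMod 2) K (u ^ 2 ^ k) = Algebra.trace (ZMod 2) K u := by
  induction k generalizing u with
  | zero => simp
  | succ k ih => rw [pow_succ, pow_mul, trace_sq, ih]

lemma exists_trace_ne {s : K} (hs : s ≠ 0) :
    ∃ x : K, Algebra.trace (ZMod 2) K (x * s) ≠ 0 := by
  have h := traceForm_nondegenerate (ZMod 2) K
  by_contra hall
  push_neg at hall
  exact hs (h.1 s (fun x => by
    rw [Algebra.traceForm_apply, mul_comm]; exact hall x))

open scoped Classical in
lemma orth (s : K) :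
    ∑ x : K, ((-1 : ℤ)) ^ (Algebra.trace (ZMod 2) K (x * s)).val =
      if s = 0 then (Fintype.card K : ℤ) else 0 := by
  classical
  split_ifs with hs
  · subst hs; simp
  · obtain ⟨x₀, hx₀⟩ := exists_trace_ne hs
    have hx1 : Algebra.trace (ZMod 2) K (x₀ * s) = 1 := zmod_eq_one hx₀
    have hx₀ne : x₀ ≠ 0 := by
      rintro rfl; rw [zero_mul, map_zero] at hx1; exact (by decide : (0 : ZMod 2) ≠ 1) hx1
    refine Finset.sum_involution (fun x _ => x + x₀) (fun x _ => ?_) (fun x _ _ => ?_)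
      (fun x _ => mem_univ _) (fun x _ => ?_)
    · have : Algebra.trace (ZMod 2) K ((x + x₀) * s)
          = Algebra.trace (ZMod 2) K (x * s) + 1 := by
        rw [add_mul, map_add, hx1]
      rw [this, zmod_sign_one]; ring
    · intro h
      exact hx₀ne (by linear_combination h)
    · show x + x₀ + x₀ = x
      rw [add_assoc, aux_self_add, add_zero]

lemma aux_add_sq (u v : K) : (u + v) ^ 2 = u ^ 2 + v ^ 2 := by
  linear_combination u * v * aux_two_eq_zero (K := K)

lemma aux_add_pow_pow (m : ℕ) (u v : K) :
    (u + v) ^ 2 ^ m = u ^ 2 ^ m + v ^ 2 ^ m := by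
  induction m generalizing u v with
  | zero => simp
  | succ m ih => rw [pow_succ, pow_mul, pow_mul, pow_mul, ih, aux_add_sq]

lemma aux_add_pow8 (u v : K) : (u + v) ^ 8 = u ^ 8 + v ^ 8 := by
  have := aux_add_pow_pow (K := K) 3 u v; norm_num at this; exact this

lemma aux_add_pow4 (u v : K) : (u + v) ^ 4 = u ^ 4 + v ^ 4 := by
  have := aux_add_pow_pow (K := K) 2 u v; norm_num at this; exact this

/-- the key polynomial expansion:  g(x+t) = g(x) + g(t) + B(x,t)  (without constant) -/
lemma expand_g (f a b c x t : K) :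
    f * (x + t) ^ 9 + a * (x + t) ^ 5 + b * (x + t) ^ 3 + c * (x + t) =
      (f * x ^ 9 + a * x ^ 5 + b * x ^ 3 + c * x)
      + (f * t ^ 9 + a * t ^ 5 + b * t ^ 3 + c * t)
      + (f * (x ^ 8 * t) + f * (x * t ^ 8) + a * (x ^ 4 * t) + a * (x * t ^ 4)
          + b * (x ^ 2 * t) + b * (x * t ^ 2)) := by
  have e2 : (x + t) ^ 2 = x ^ 2 + t ^ 2 := aux_add_sq x t
  have e4 : (x + t) ^ 4 = x ^ 4 + t ^ 4 := aux_add_pow4 x t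
  have e8 : (x + t) ^ 8 = x ^ 8 + t ^ 8 := aux_add_pow8 x t
  calc f * (x + t) ^ 9 + a * (x + t) ^ 5 + b * (x + t) ^ 3 + c * (x + t)
      = f * ((x + t) ^ 8 * (x + t)) + a * ((x + t) ^ 4 * (x + t))
        + b * ((x + t) ^ 2 * (x + t)) + c * (x + t) := by ring
    _ = f * ((x ^ 8 + t ^ 8) * (x + t)) + a * ((x ^ 4 + t ^ 4) * (x + t))
        + b * ((x ^ 2 + t ^ 2) * (x + t)) + c * (x + t) := by rw [e2, e4, e8]
    _ = _ := by ring

variable (n : ℕ)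

/-- the "adjoint" linearised map whose kernel is the radical of the bilinear form -/
noncomputable def auxR (f a b : K) (t : K) : K :=
  f * t ^ 8 + a * t ^ 4 + b * t ^ 2 + (b * t) ^ 2 ^ (n - 1)
    + (a * t) ^ 2 ^ (n - 2) + (f * t) ^ 2 ^ (n - 3)

lemma auxR_add (f a b t t' : K) :
    auxR n f a b (t + t') = auxR n f a b t + auxR n f a b t' := by
  unfold auxR
  rw [mul_add b, mul_add a, mul_add f, aux_add_pow_pow, aux_add_pow_pow, aux_add_pow_pow,
    aux_add_pow8, aux_add_pow4, aux_add_sq]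
  ring

lemma auxR_zero (f a b : K) : auxR n f a b 0 = 0 := by
  have hz : ∀ m : ℕ, (0 : K) ^ 2 ^ m = 0 :=
    fun m => zero_pow (by positivity)
  unfold auxR
  simp [hz]


lemma aux_pow_card (hcard : Fintype.card K = 2 ^ n) (u : K) : u ^ 2 ^ n = u := by
  have := FiniteField.pow_card u; rwa [hcard] at this

lemma aux_pow_dvd (hcard : Fintype.card K = 2 ^ n) {j : ℕ} (h : n ∣ j) (u : K) :
    u ^ 2 ^ j = u := by
  obtain ⟨m, rfl⟩ := h
  induction m with
  | zero => simp
  | succ m ih =>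
      rw [Nat.mul_succ, pow_add, pow_mul, ih, aux_pow_card n hcard]

lemma trace_B (hn : Odd n) (hcard : Fintype.card K = 2 ^ n) (f a b x t : K) :
    Algebra.trace (ZMod 2) K
      (f * (x ^ 8 * t) + f * (x * t ^ 8) + a * (x ^ 4 * t) + a * (x * t ^ 4)
        + b * (x ^ 2 * t) + b * (x * t ^ 2))
    = Algebra.trace (ZMod 2) K (x * auxR n f a b t) := by
  obtain ⟨m, hm⟩ := hn
  have key : ∀ (k j : ℕ) (u : K), n ∣ (n - k + k) → 2 ^ k = j →
      Algebra.trace (ZMod 2) K (x * u ^ 2 ^ (n - k))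
        = Algebra.trace (ZMod 2) K (x ^ j * u) := by
    intro k j u hdvd hj
    rw [← trace_pow_pow k (x * u ^ 2 ^ (n - k))]
    congr 1
    rw [mul_pow, ← pow_mul, ← pow_add, aux_pow_dvd n hcard hdvd, hj]
  have hd1 : n ∣ n - 1 + 1 := by
    have : n - 1 + 1 = n := by omega
    rw [this]
  have hd2 : n ∣ n - 2 + 2 := by
    rcases eq_or_ne n 1 with rfl | h1
    · exact one_dvd _
    · have : n - 2 + 2 = n := by omega
      rw [this]
  have hd3 : n ∣ n - 3 + 3 := by
    rcases eq_or_ne n 1 with rfl | h1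
    · exact one_dvd _
    · have : n - 3 + 3 = n := by omega
      rw [this]
  have hb := key 1 2 (b * t) hd1 (by norm_num)
  have ha := key 2 4 (a * t) hd2 (by norm_num)
  have hf := key 3 8 (f * t) hd3 (by norm_num)
  have hx : x * auxR n f a b t
      = f * (x * t ^ 8) + a * (x * t ^ 4) + b * (x * t ^ 2)
        + x * (b * t) ^ 2 ^ (n - 1) + x * (a * t) ^ 2 ^ (n - 2)
        + x * (f * t) ^ 2 ^ (n - 3) := by
    unfold auxR; ring
  rw [hx]
  simp only [map_add]
  rw [hb, ha, hf]
  have e1 : x ^ 2 * (b * t) = b * (x ^ 2 * t) := by ring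
  have e2 : x ^ 4 * (a * t) = a * (x ^ 4 * t) := by ring
  have e3 : x ^ 8 * (f * t) = f * (x ^ 8 * t) := by ring
  rw [e1, e2, e3]
  ring

lemma auxR_pow8 (hn3 : 3 ≤ n) (hcard : Fintype.card K = 2 ^ n) (f a b t : K)
    (h : auxR n f a b t = 0) :
    f ^ 8 * t ^ 64 + a ^ 8 * t ^ 32 + b ^ 8 * t ^ 16 + b ^ 4 * t ^ 4
      + a ^ 2 * t ^ 2 + f * t = 0 := by
  have hpow : ∀ (k j : ℕ) (u : K), n - k + 3 = n + j →
      (u ^ 2 ^ (n - k)) ^ 8 = u ^ 2 ^ j := by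
    intro k j u hkj
    rw [← pow_mul]
    have : 2 ^ (n - k) * 8 = 2 ^ n * 2 ^ j := by
      rw [show (8 : ℕ) = 2 ^ 3 by norm_num, ← pow_add, hkj, pow_add]
    rw [this, pow_mul, aux_pow_card n hcard]
  have key : (auxR n f a b t) ^ 8
      = f ^ 8 * t ^ 64 + a ^ 8 * t ^ 32 + b ^ 8 * t ^ 16 + b ^ 4 * t ^ 4
        + a ^ 2 * t ^ 2 + f * t := by
    unfold auxR
    simp only [aux_add_pow8]
    rw [hpow 1 2 (b * t) (by omega), hpow 2 1 (a * t) (by omega),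
      hpow 3 0 (f * t) (by omega)]
    norm_num
    ring
  rw [← key, h]
  norm_num


open scoped Classical in
lemma main_sum_sq (hn : Odd n) (hcard : Fintype.card K = 2 ^ n) (f a b c d : K) :
    (∑ x : K, ((-1 : ℤ)) ^ (Algebra.trace (ZMod 2) K
        (f * x ^ 9 + a * x ^ 5 + b * x ^ 3 + c * x + d)).val) *
      (∑ x : K, ((-1 : ℤ)) ^ (Algebra.trace (ZMod 2) K
        (f * x ^ 9 + a * x ^ 5 + b * x ^ 3 + c * x + d)).val)
    = (2 ^ n : ℤ) * ∑ t ∈ univ.filter (fun t : K => auxR n f a b t = 0),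
        ((-1 : ℤ)) ^ (Algebra.trace (ZMod 2) K
          (f * t ^ 9 + a * t ^ 5 + b * t ^ 3 + c * t)).val := by
  have hpoint : ∀ x t : K,
      ((-1 : ℤ)) ^ (Algebra.trace (ZMod 2) K
          (f * x ^ 9 + a * x ^ 5 + b * x ^ 3 + c * x + d)).val *
        ((-1 : ℤ)) ^ (Algebra.trace (ZMod 2) K
          (f * (x + t) ^ 9 + a * (x + t) ^ 5 + b * (x + t) ^ 3 + c * (x + t) + d)).val
      = ((-1 : ℤ)) ^ (Algebra.trace (ZMod 2) K
          (f * t ^ 9 + a * t ^ 5 + b * t ^ 3 + c * t)).val *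
        ((-1 : ℤ)) ^ (Algebra.trace (ZMod 2) K (x * auxR n f a b t)).val := by
    intro x t
    have hgsum : (f * x ^ 9 + a * x ^ 5 + b * x ^ 3 + c * x + d)
        + (f * (x + t) ^ 9 + a * (x + t) ^ 5 + b * (x + t) ^ 3 + c * (x + t) + d)
        = (f * t ^ 9 + a * t ^ 5 + b * t ^ 3 + c * t)
          + (f * (x ^ 8 * t) + f * (x * t ^ 8) + a * (x ^ 4 * t) + a * (x * t ^ 4)
            + b * (x ^ 2 * t) + b * (x * t ^ 2)) := by
      have hE := expand_g (K := K) f a b c x t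
      have h0 := aux_two_eq_zero (K := K)
      linear_combination hE + (f * x ^ 9 + a * x ^ 5 + b * x ^ 3 + c * x + d) * h0
    rw [← zmod_sign_add, ← map_add, hgsum, map_add, zmod_sign_add,
      trace_B n hn hcard f a b x t]
  calc (∑ x : K, ((-1 : ℤ)) ^ (Algebra.trace (ZMod 2) K
        (f * x ^ 9 + a * x ^ 5 + b * x ^ 3 + c * x + d)).val) *
      (∑ y : K, ((-1 : ℤ)) ^ (Algebra.trace (ZMod 2) K
        (f * y ^ 9 + a * y ^ 5 + b * y ^ 3 + c * y + d)).val)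
      = ∑ x : K, ∑ y : K, ((-1 : ℤ)) ^ (Algebra.trace (ZMod 2) K
            (f * x ^ 9 + a * x ^ 5 + b * x ^ 3 + c * x + d)).val *
          ((-1 : ℤ)) ^ (Algebra.trace (ZMod 2) K
            (f * y ^ 9 + a * y ^ 5 + b * y ^ 3 + c * y + d)).val := by
        rw [Finset.sum_mul_sum]
    _ = ∑ x : K, ∑ t : K, ((-1 : ℤ)) ^ (Algebra.trace (ZMod 2) K
            (f * x ^ 9 + a * x ^ 5 + b * x ^ 3 + c * x + d)).val *
          ((-1 : ℤ)) ^ (Algebra.trace (ZMod 2) K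
            (f * (x + t) ^ 9 + a * (x + t) ^ 5 + b * (x + t) ^ 3 + c * (x + t) + d)).val := by
        refine Finset.sum_congr rfl (fun x _ => ?_)
        exact (Fintype.sum_equiv (Equiv.addLeft x) _ _ (fun t => rfl)).symm
    _ = ∑ x : K, ∑ t : K, ((-1 : ℤ)) ^ (Algebra.trace (ZMod 2) K
            (f * t ^ 9 + a * t ^ 5 + b * t ^ 3 + c * t)).val *
          ((-1 : ℤ)) ^ (Algebra.trace (ZMod 2) K (x * auxR n f a b t)).val := by
        exact Finset.sum_congr rfl (fun x _ => Finset.sum_congr rfl (fun t _ => hpoint x t))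
    _ = ∑ t : K, ∑ x : K, ((-1 : ℤ)) ^ (Algebra.trace (ZMod 2) K
            (f * t ^ 9 + a * t ^ 5 + b * t ^ 3 + c * t)).val *
          ((-1 : ℤ)) ^ (Algebra.trace (ZMod 2) K (x * auxR n f a b t)).val :=
        Finset.sum_comm
    _ = ∑ t : K, ((-1 : ℤ)) ^ (Algebra.trace (ZMod 2) K
            (f * t ^ 9 + a * t ^ 5 + b * t ^ 3 + c * t)).val *
          ∑ x : K, ((-1 : ℤ)) ^ (Algebra.trace (ZMod 2) K (x * auxR n f a b t)).val := by
        exact Finset.sum_congr rfl (fun t _ => (Finset.mul_sum _ _ _).symm)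
    _ = ∑ t : K, ((-1 : ℤ)) ^ (Algebra.trace (ZMod 2) K
            (f * t ^ 9 + a * t ^ 5 + b * t ^ 3 + c * t)).val *
          (if auxR n f a b t = 0 then ((2 : ℤ) ^ n) else 0) := by
        refine Finset.sum_congr rfl (fun t _ => ?_)
        rw [orth (auxR n f a b t), hcard]
        push_cast
        rfl
    _ = ∑ t ∈ univ.filter (fun t : K => auxR n f a b t = 0),
          ((-1 : ℤ)) ^ (Algebra.trace (ZMod 2) K
            (f * t ^ 9 + a * t ^ 5 + b * t ^ 3 + c * t)).val * ((2 : ℤ) ^ n) := by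
        rw [Finset.sum_filter]
        exact Finset.sum_congr rfl (fun t _ => by split_ifs <;> simp)
    _ = (2 ^ n : ℤ) * ∑ t ∈ univ.filter (fun t : K => auxR n f a b t = 0),
          ((-1 : ℤ)) ^ (Algebra.trace (ZMod 2) K
            (f * t ^ 9 + a * t ^ 5 + b * t ^ 3 + c * t)).val := by
        rw [Finset.mul_sum]
        exact Finset.sum_congr rfl (fun t _ => mul_comm _ _)


open scoped Classical in
lemma T_value (hn : Odd n) (hcard : Fintype.card K = 2 ^ n) (f a b c : K) :
    (∑ t ∈ univ.filter (fun t : K => auxR n f a b t = 0),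
        ((-1 : ℤ)) ^ (Algebra.trace (ZMod 2) K
          (f * t ^ 9 + a * t ^ 5 + b * t ^ 3 + c * t)).val) = 0 ∨
    (∑ t ∈ univ.filter (fun t : K => auxR n f a b t = 0),
        ((-1 : ℤ)) ^ (Algebra.trace (ZMod 2) K
          (f * t ^ 9 + a * t ^ 5 + b * t ^ 3 + c * t)).val)
      = ((univ.filter (fun t : K => auxR n f a b t = 0)).card : ℤ) := by
  by_cases hall : ∀ t ∈ univ.filter (fun t : K => auxR n f a b t = 0),
      Algebra.trace (ZMod 2) K (f * t ^ 9 + a * t ^ 5 + b * t ^ 3 + c * t) = 0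
  · right
    calc (∑ t ∈ univ.filter (fun t : K => auxR n f a b t = 0),
          ((-1 : ℤ)) ^ (Algebra.trace (ZMod 2) K
            (f * t ^ 9 + a * t ^ 5 + b * t ^ 3 + c * t)).val)
        = ∑ t ∈ univ.filter (fun t : K => auxR n f a b t = 0), (1 : ℤ) := by
          refine Finset.sum_congr rfl (fun t ht => ?_)
          rw [hall t ht]
          rfl
      _ = _ := by simp
  · left
    push_neg at hall
    obtain ⟨t₀, ht₀mem, ht₀⟩ := hall
    have hR₀ : auxR n f a b t₀ = 0 := (Finset.mem_filter.mp ht₀mem).2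
    have ht₀1 : Algebra.trace (ZMod 2) K (f * t₀ ^ 9 + a * t₀ ^ 5 + b * t₀ ^ 3 + c * t₀) = 1 :=
      zmod_eq_one ht₀
    have ht₀ne : t₀ ≠ 0 := by
      rintro rfl
      rw [show f * (0:K) ^ 9 + a * 0 ^ 5 + b * 0 ^ 3 + c * 0 = 0 by ring, map_zero] at ht₀1
      exact (by decide : (0 : ZMod 2) ≠ 1) ht₀1
    refine Finset.sum_involution (fun t _ => t + t₀) (fun t ht => ?_) (fun t _ _ h => ?_)
      (fun t ht => ?_) (fun t ht => ?_)
    · -- f t + f (t + t₀) = 0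
      have htr : Algebra.trace (ZMod 2) K
          (f * (t + t₀) ^ 9 + a * (t + t₀) ^ 5 + b * (t + t₀) ^ 3 + c * (t + t₀))
          = Algebra.trace (ZMod 2) K (f * t ^ 9 + a * t ^ 5 + b * t ^ 3 + c * t) + 1 := by
        rw [expand_g f a b c t t₀, map_add, map_add, ht₀1,
          trace_B n hn hcard f a b t t₀, hR₀, mul_zero, map_zero, add_zero]
      rw [htr, zmod_sign_one]
      ring
    · -- t + t₀ ≠ t
      exact ht₀ne (by linear_combination h)
    · -- membership
      simp only [Finset.mem_filter, Finset.mem_univ, true_and] at ht ⊢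
      rw [auxR_add, ht, hR₀, add_zero]
    · show t + t₀ + t₀ = t
      rw [add_assoc, aux_self_add, add_zero]

open scoped Classical in
lemma card_VF_dvd (f a b : K) (hcard : Fintype.card K = 2 ^ n) :
    (univ.filter (fun t : K => auxR n f a b t = 0)).card ∣ 2 ^ n := by
  set V : AddSubgroup K :=
    { carrier := {t : K | auxR n f a b t = 0}
      zero_mem' := auxR_zero n f a b
      add_mem' := by
        intro s t hs ht
        simp only [Set.mem_setOf_eq] at hs ht ⊢
        rw [auxR_add, hs, ht, add_zero]
      neg_mem' := by
        intro s hs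
        simp only [Set.mem_setOf_eq] at hs ⊢
        have : -s = s := by linear_combination - aux_self_add (K := K) s
        rw [this]
        exact hs } with hV
  have h1 : Nat.card V ∣ Nat.card K := AddSubgroup.card_addSubgroup_dvd_card V
  have h2 : Nat.card V = (univ.filter (fun t : K => auxR n f a b t = 0)).card := by
    rw [Nat.card_eq_fintype_card]
    rw [show (univ.filter (fun t : K => auxR n f a b t = 0))
        = (univ.filter (fun t : K => t ∈ V)) from by
      refine Finset.filter_congr (fun t _ => ?_)
      simp [hV, AddSubgroup.mem_mk]]
    rw [← Fintype.card_subtype]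
  rw [← h2, ← hcard, ← Nat.card_eq_fintype_card]
  exact h1


open Polynomial in
open scoped Classical in
lemma card_VF_le (hn3 : 3 ≤ n) (hcard : Fintype.card K = 2 ^ n) (f a b : K) (hf : f ≠ 0) :
    (univ.filter (fun t : K => auxR n f a b t = 0)).card ≤ 64 := by
  set p : Polynomial K := C (f ^ 8) * X ^ 64 + C (a ^ 8) * X ^ 32 + C (b ^ 8) * X ^ 16
    + C (b ^ 4) * X ^ 4 + C (a ^ 2) * X ^ 2 + C f * X with hp
  have hco : p.coeff 64 = f ^ 8 := by
    rw [hp]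
    simp only [coeff_add, coeff_C_mul, coeff_X_pow, coeff_X]
    norm_num
  have hpne : p ≠ 0 := by
    intro h
    rw [h] at hco
    simp at hco
    exact hf (pow_eq_zero_iff (by norm_num) |>.mp hco.symm)
  have hdeg : p.natDegree ≤ 64 := by
    rw [hp]
    compute_degree
  have hsub : (univ.filter (fun t : K => auxR n f a b t = 0)) ⊆ p.roots.toFinset := by
    intro t ht
    rw [Multiset.mem_toFinset, Polynomial.mem_roots hpne]
    have h0 := auxR_pow8 n hn3 hcard f a b t (Finset.mem_filter.mp ht).2
    show p.eval t = 0
    rw [hp]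
    simp only [eval_add, eval_mul, eval_pow, eval_C, eval_X]
    linear_combination h0
  calc (univ.filter (fun t : K => auxR n f a b t = 0)).card
      ≤ p.roots.toFinset.card := Finset.card_le_card hsub
    _ ≤ Multiset.card p.roots := Multiset.toFinset_card_le _
    _ ≤ p.natDegree := p.card_roots'
    _ ≤ 64 := hdeg

end Aux

/-- Let `n` be odd, `q = 2^n`, `f ≠ 0`.  If the number of points `N` (including
the point at infinity) of the smooth projective hyperelliptic curve
`y² + y = f x⁹ + a x⁵ + b x³ + c x + d` over `𝔽_q` satisfies
`N − (q+1) = ∑_x (−1)^{Tr(f x⁹ + a x⁵ + b x³ + c x + d)}`, then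
`N − (q+1) ∈ {0, ±√(2q), ±2√(2q), ±4√(2q)}` where `√(2q) = 2^{(n+1)/2}`. -/
theorem genus4_point_count
    (n : ℕ) (hn : Odd n) (K : Type*) [Field K] [Fintype K]
    [Algebra (ZMod 2) K] (hcard : Fintype.card K = 2 ^ n)
    (f a b c d : K) (hf : f ≠ 0)
    (N : ℕ)
    (hN : (N : ℤ) - (2 ^ n + 1) =
      ∑ x : K, (-1 : ℤ) ^ (Algebra.trace (ZMod 2) K
        (f * x ^ 9 + a * x ^ 5 + b * x ^ 3 + c * x + d)).val) :
    (N : ℤ) - (2 ^ n + 1) ∈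
      ({0, 2 ^ ((n + 1) / 2), -(2 ^ ((n + 1) / 2)),
        2 * 2 ^ ((n + 1) / 2), -(2 * 2 ^ ((n + 1) / 2)),
        4 * 2 ^ ((n + 1) / 2), -(4 * 2 ^ ((n + 1) / 2))} : Set ℤ) := by
  rw [hN]
  have hmain := main_sum_sq n hn hcard f a b c d
  have hTv := T_value n hn hcard f a b c
  have hdvd := card_VF_dvd n f a b hcard
  set S : ℤ := ∑ x : K, (-1 : ℤ) ^ (Algebra.trace (ZMod 2) K
      (f * x ^ 9 + a * x ^ 5 + b * x ^ 3 + c * x + d)).val with hSdef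

  simp only [Set.mem_insert_iff, Set.mem_singleton_iff]
  rcases hTv with hT | hT
  · -- degenerate case : S = 0
    have hS0 : S = 0 := mul_self_eq_zero.mp (by rw [hmain, hT, mul_zero])
    exact Or.inl hS0
  · -- S² = 2^(n+w)
    obtain ⟨w, hwle, hw⟩ := (Nat.dvd_prime_pow Nat.prime_two).mp hdvd
    have hSS : S * S = 2 ^ (n + w) := by
      rw [hmain, hT, hw]
      push_cast
      rw [← pow_add]
    have hnat : S.natAbs * S.natAbs = 2 ^ (n + w) := by
      have h1 : ((S.natAbs * S.natAbs : ℕ) : ℤ) = S * S := Int.natAbs_mul_self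
      rw [hSS] at h1
      exact_mod_cast h1
    have hdvd2 : S.natAbs ∣ 2 ^ (n + w) := by
      rw [← hnat]; exact dvd_mul_right _ _
    obtain ⟨k, hkle, hke⟩ := (Nat.dvd_prime_pow Nat.prime_two).mp hdvd2
    have h2k : (2 : ℕ) ^ (k + k) = 2 ^ (n + w) := by
      rw [pow_add, ← hke]; exact hnat
    have hkk : k + k = n + w := Nat.pow_right_injective (le_refl 2) h2k
    have hw6 : w ≤ 6 := by
      by_cases hn3 : 3 ≤ n
      · have hle := card_VF_le n hn3 hcard f a b hf
        rw [hw] at hle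
        have h64 : (2 : ℕ) ^ w ≤ 2 ^ 6 := le_trans hle (by norm_num)
        exact (Nat.pow_le_pow_iff_right (by norm_num)).mp h64
      · omega
    obtain ⟨m, hm⟩ := hn
    have hw135 : w = 1 ∨ w = 3 ∨ w = 5 := by omega
    have habs : S = (2 : ℤ) ^ k ∨ S = -(2 : ℤ) ^ k := by
      rcases Int.natAbs_eq S with h | h
      · left; rw [h, hke]; push_cast; ring
      · right; rw [h, hke]; push_cast; ring
    rcases hw135 with rfl | rfl | rfl
    · have hk1 : k = (n + 1) / 2 := by omega
      rw [hk1] at habs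
      rcases habs with h | h
      · exact Or.inr (Or.inl h)
      · exact Or.inr (Or.inr (Or.inl h))
    · have hk3 : k = (n + 1) / 2 + 1 := by omega
      have h2 : (2 : ℤ) ^ k = 2 * 2 ^ ((n + 1) / 2) := by rw [hk3, pow_succ]; ring
      rcases habs with h | h
      · exact Or.inr (Or.inr (Or.inr (Or.inl (by rw [h, h2]))))
      · exact Or.inr (Or.inr (Or.inr (Or.inr (Or.inl (by rw [h, h2])))))
    · have hk5 : k = (n + 1) / 2 + 2 := by omega
      have h2 : (2 : ℤ) ^ k = 4 * 2 ^ ((n + 1) / 2) := by rw [hk5, pow_add]; ring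
      rcases habs with h | h
      · exact Or.inr (Or.inr (Or.inr (Or.inr (Or.inr (Or.inl (by rw [h, h2]))))))
      · exact Or.inr (Or.inr (Or.inr (Or.inr (Or.inr (Or.inr (by rw [h, h2]))))))
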